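/- Let C^{(k)} be diagonal non-negative matrices and T_i^{(k)} matrices with (T_i^{(k)})^t K_C = K_C T_i^{(k)}, and let X_i = a_i⁺ + T_i + ã_i⁻ on the deformed Fock space. Then the functional φ(P) = ⟨Ω, P(X₁,…,X_d)Ω⟩_C on R⟨x₁,…,x_d⟩ is a state: it is linear, unital, positive, and satisfies φ(P) = φ(P*). -/

import Mathlib

noncomputable section
open scoped Classical

abbrev NCPoly (d : ℕ) := FreeAlgebra ℝ (Fin d)

def Xmon {d : ℕ} (u : List (Fin d)) : NCPoly d := (u.map (FreeAlgebra.ι ℝ)).prod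

structure IsState {d : ℕ} (φ : NCPoly d →ₗ[ℝ] ℝ) : Prop where
  unital : φ 1 = 1
  star_comp : ∀ p : NCPoly d, φ (star p) = φ p
  pos : ∀ p : NCPoly d, 0 ≤ φ (star p * p)

def ipS {d : ℕ} (φ : NCPoly d →ₗ[ℝ] ℝ) (p q : NCPoly d) : ℝ := φ (star p * q)

def IsMonicFamily {d : ℕ} (P : List (Fin d) → NCPoly d) : Prop :=
  ∀ u, P u - Xmon u ∈
    Submodule.span ℝ {q : NCPoly d | ∃ v : List (Fin d), v.length < u.length ∧ q = Xmon v}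

def IsMOPS {d : ℕ} (φ : NCPoly d →ₗ[ℝ] ℝ) (P : List (Fin d) → NCPoly d) : Prop :=
  IsMonicFamily P ∧ ∀ u v, u ≠ v → ipS φ (P u) (P v) = 0

def wordsLen (d : ℕ) : ℕ → Finset (List (Fin d))
  | 0 => {[]}
  | k + 1 => ((Finset.univ : Finset (Fin d)) ×ˢ wordsLen d k).image fun p => p.1 :: p.2

/-- The algebraic full Fock space over ℝ^d (= ℂ^d with real structure): the free
vector space on the set of words, a word `u` representing the basis tensor
`e_{u(1)} ⊗ ⋯ ⊗ e_{u(k)}`; the empty word represents the vacuum Ω. -/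
abbrev FockF (d : ℕ) := List (Fin d) →₀ ℝ

def vac {d : ℕ} : FockF d := Finsupp.single [] 1

def eVec {d : ℕ} (u : List (Fin d)) : FockF d := Finsupp.single u 1

/-- Diagonal operator with diagonal entries `f u` in the tensor basis. -/
def diagOp {d : ℕ} (f : List (Fin d) → ℝ) : FockF d →ₗ[ℝ] FockF d :=
  Finsupp.lsum ℝ fun u => f u • Finsupp.lsingle u

/-- The diagonal entry of K_C at the basis tensor e_u:
`K_u = ∏_{j=1}^{k} C_{(u(j),…,u(k))}`, the product of the `C`-entries over all
nonempty suffixes of `u`, corresponding to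
`K_C = (I⊗…⊗I⊗C^{(1)}) ⋯ (I⊗C^{(k-1)}) C^{(k)}`. -/
def kC {d : ℕ} (c : List (Fin d) → ℝ) (u : List (Fin d)) : ℝ :=
  ∏ j ∈ Finset.range u.length, c (u.drop j)

/-- The kernel K_C as an operator. -/
def Kop {d : ℕ} (c : List (Fin d) → ℝ) : FockF d →ₗ[ℝ] FockF d := diagOp (kC c)

/-- The operator C acting as the diagonal matrix C^{(k)} on each H^{⊗k}. -/
def Cop {d : ℕ} (c : List (Fin d) → ℝ) : FockF d →ₗ[ℝ] FockF d := diagOp c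

/-- The undeformed inner product ⟨ζ,·⟩ (basis tensors orthonormal, distinct degrees
orthogonal), as a linear functional in the second variable. -/
def ipW {d : ℕ} (ζ : FockF d) : FockF d →ₗ[ℝ] ℝ :=
  Finsupp.lsum ℝ fun u => LinearMap.smulRight (LinearMap.id : ℝ →ₗ[ℝ] ℝ) (ζ u)

/-- The deformed pre-inner product ⟨ζ,η⟩_C = ⟨ζ, K_C η⟩, linear in the second variable. -/
def ipCL {d : ℕ} (c : List (Fin d) → ℝ) (ζ : FockF d) : FockF d →ₗ[ℝ] ℝ :=
  (ipW ζ).comp (Kop c)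

def ipC {d : ℕ} (c : List (Fin d) → ℝ) (ζ η : FockF d) : ℝ := ipCL c ζ η

/-- The deformed seminorm. -/
def nrmC {d : ℕ} (c : List (Fin d) → ℝ) (ζ : FockF d) : ℝ := Real.sqrt (ipC c ζ ζ)

/-- Free (left) creation operator a_i⁺. -/
def aPlus {d : ℕ} (i : Fin d) : FockF d →ₗ[ℝ] FockF d :=
  Finsupp.lmapDomain ℝ ℝ (fun u => i :: u)

/-- Free (left) annihilation operator a_i⁻. -/
def aMinus {d : ℕ} (i : Fin d) : FockF d →ₗ[ℝ] FockF d :=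
  Finsupp.lsum ℝ fun u =>
    match u with
    | [] => 0
    | j :: v => if j = i then Finsupp.lsingle v else 0

/-- The block-diagonal operator T with matrix entries `t w u` (T e_u = Σ_w t w u e_w,
the sum over words w of the same length as u). -/
def Tmat {d : ℕ} (t : List (Fin d) → List (Fin d) → ℝ) : FockF d →ₗ[ℝ] FockF d :=
  Finsupp.lsum ℝ fun u => ∑ w ∈ wordsLen d u.length, t w u • Finsupp.lsingle w

/-- t is degree preserving: the matrices T_i^{(k)} act within each H^{⊗k}. -/
def DegPres {d : ℕ} (t : Fin d → List (Fin d) → List (Fin d) → ℝ) : Prop :=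
  ∀ i w u, t i w u ≠ 0 → w.length = u.length

/-- The condition (T_i)^t K_C = K_C T_i, entrywise. -/
def TransposeCond {d : ℕ} (c : List (Fin d) → ℝ)
    (t : Fin d → List (Fin d) → List (Fin d) → ℝ) : Prop :=
  ∀ i u w, t i u w * kC c u = kC c w * t i w u

/-- The operator X_i = a_i⁺ + T_i + ã_i⁻, where ã_i⁻ = a_i⁻ C. -/
def Xop {d : ℕ} (c : List (Fin d) → ℝ) (t : Fin d → List (Fin d) → List (Fin d) → ℝ)
    (i : Fin d) : FockF d →ₗ[ℝ] FockF d :=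
  aPlus i + Tmat (t i) + (aMinus i).comp (Cop c)

/-- Evaluation of a polynomial in the operators X₁,…,X_d. -/
def evalX {d : ℕ} (c : List (Fin d) → ℝ) (t : Fin d → List (Fin d) → List (Fin d) → ℝ) :
    NCPoly d →ₐ[ℝ] Module.End ℝ (FockF d) :=
  FreeAlgebra.lift ℝ (fun i => Xop c t i)

/-- The Fock state φ_{C,{T_i}} : P ↦ ⟨Ω, P(X₁,…,X_d)Ω⟩_C. -/
def fockPhi {d : ℕ} (c : List (Fin d) → ℝ) (t : Fin d → List (Fin d) → List (Fin d) → ℝ) :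
    NCPoly d →ₗ[ℝ] ℝ :=
  (ipCL c vac).comp ((LinearMap.applyₗ (vac : FockF d)).comp (evalX c t).toLinearMap)

section Aux

variable {d : ℕ}

lemma kC_nil (c : List (Fin d) → ℝ) : kC c ([] : List (Fin d)) = 1 := by
  simp [kC]

lemma kC_cons (c : List (Fin d) → ℝ) (i : Fin d) (u : List (Fin d)) :
    kC c (i :: u) = c (i :: u) * kC c u := by
  simp only [kC, List.length_cons, Finset.prod_range_succ']
  rw [mul_comm]
  simp

lemma kC_nonneg (c : List (Fin d) → ℝ) (hc : ∀ u, 0 ≤ c u) (u : List (Fin d)) :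
    0 ≤ kC c u :=
  Finset.prod_nonneg fun _ _ => hc _

lemma diagOp_apply (f : List (Fin d) → ℝ) (η : FockF d) (v : List (Fin d)) :
    diagOp f η v = f v * η v := by
  classical
  rw [diagOp, Finsupp.lsum_apply, Finsupp.sum_apply]
  rw [Finsupp.sum]
  simp only [LinearMap.smul_apply, Finsupp.lsingle_apply, Finsupp.smul_single,
    smul_eq_mul, Finsupp.single_apply]
  rw [Finset.sum_eq_single v]
  · by_cases h : v ∈ η.support
    · simp
    · simp [Finsupp.notMem_support_iff.mp h]
  · intro b _ hb
    simp [hb]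
  · intro h
    simp [Finsupp.notMem_support_iff.mp h]

lemma ipW_apply' (ζ η : FockF d) : ipW ζ η = ∑ u ∈ η.support, η u * ζ u := by
  rw [ipW, Finsupp.lsum_apply, Finsupp.sum]
  simp [smul_eq_mul]

lemma Kop_apply (c : List (Fin d) → ℝ) (η : FockF d) (v : List (Fin d)) :
    Kop c η v = kC c v * η v := diagOp_apply _ _ _

/-- Master formula for the deformed inner product over any sufficiently large finset. -/
lemma ipC_eq (c : List (Fin d) → ℝ) (ζ η : FockF d) (s : Finset (List (Fin d)))
    (hη : η.support ⊆ s) :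
    ipC c ζ η = ∑ u ∈ s, kC c u * ζ u * η u := by
  classical
  have hsup : (Kop c η).support ⊆ s := by
    intro u hu
    apply hη
    rw [Finsupp.mem_support_iff] at hu ⊢
    intro h0
    rw [Kop_apply, h0, mul_zero] at hu
    exact hu rfl
  rw [ipC, ipCL, LinearMap.comp_apply, ipW_apply']
  rw [Finset.sum_subset hsup]
  · apply Finset.sum_congr rfl
    intro u _
    rw [Kop_apply]; ring
  · intro u _ hu
    rw [Finsupp.notMem_support_iff.mp hu, zero_mul]

lemma ipC_symm (c : List (Fin d) → ℝ) (ζ η : FockF d) : ipC c ζ η = ipC c η ζ := by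
  classical
  rw [ipC_eq c ζ η (ζ.support ∪ η.support) (Finset.subset_union_right),
    ipC_eq c η ζ (ζ.support ∪ η.support) (Finset.subset_union_left)]
  exact Finset.sum_congr rfl fun u _ => by ring

lemma ipC_add_left (c : List (Fin d) → ℝ) (ζ₁ ζ₂ η : FockF d) :
    ipC c (ζ₁ + ζ₂) η = ipC c ζ₁ η + ipC c ζ₂ η := by
  rw [ipC_symm, ipC_symm c ζ₁, ipC_symm c ζ₂]
  exact map_add (ipCL c η) _ _

lemma ipC_smul_left (c : List (Fin d) → ℝ) (r : ℝ) (ζ η : FockF d) :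
    ipC c (r • ζ) η = r * ipC c ζ η := by
  rw [ipC_symm, ipC_symm c ζ]
  exact map_smul (ipCL c η) _ _

lemma ipC_zero_left (c : List (Fin d) → ℝ) (η : FockF d) : ipC c 0 η = 0 := by
  rw [ipC_symm]; exact map_zero (ipCL c η)

lemma ipC_single (c : List (Fin d) → ℝ) (u v : List (Fin d)) (a b : ℝ) :
    ipC c (Finsupp.single u a) (Finsupp.single v b) =
      if u = v then kC c u * a * b else 0 := by
  classical
  rw [ipC_eq c _ _ {v} Finsupp.support_single_subset]
  simp only [Finset.sum_singleton, Finsupp.single_apply]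
  by_cases h : u = v <;> simp [h]

lemma ipC_nonneg (c : List (Fin d) → ℝ) (hc : ∀ u, 0 ≤ c u) (ζ : FockF d) :
    0 ≤ ipC c ζ ζ := by
  rw [ipC_eq c ζ ζ ζ.support (subset_refl _)]
  apply Finset.sum_nonneg
  intro u _
  rw [mul_assoc]
  exact mul_nonneg (kC_nonneg c hc u) (mul_self_nonneg _)

/-- Extension of an adjoint relation from singles to all vectors, by bilinearity. -/
lemma ipC_ext (c : List (Fin d) → ℝ) (A B : FockF d →ₗ[ℝ] FockF d)
    (h : ∀ u v (a b : ℝ),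
      ipC c (A (Finsupp.single u a)) (Finsupp.single v b) =
        ipC c (Finsupp.single u a) (B (Finsupp.single v b)))
    (ζ η : FockF d) : ipC c (A ζ) η = ipC c ζ (B η) := by
  classical
  induction ζ using Finsupp.induction_linear generalizing η with
  | zero => rw [map_zero, ipC_zero_left, ipC_zero_left]
  | add ζ₁ ζ₂ ih₁ ih₂ =>
      rw [map_add, ipC_add_left, ipC_add_left, ih₁, ih₂]
  | single u a =>
      induction η using Finsupp.induction_linear with
      | zero =>
          rw [map_zero]
          exact (map_zero (ipCL c _)).trans (map_zero (ipCL c _)).symm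
      | add η₁ η₂ ih₁ ih₂ =>
          rw [map_add]
          show ipCL c _ (η₁ + η₂) = ipCL c _ (B η₁ + B η₂)
          rw [map_add, map_add]
          exact congrArg₂ (· + ·) ih₁ ih₂
      | single v b => exact h u v a b

lemma aPlus_single (i : Fin d) (u : List (Fin d)) (a : ℝ) :
    aPlus i (Finsupp.single u a) = Finsupp.single (i :: u) a := by
  rw [aPlus]
  exact Finsupp.mapDomain_single

lemma aMinus_single_nil (i : Fin d) (a : ℝ) :
    aMinus i (Finsupp.single ([] : List (Fin d)) a) = 0 := by
  rw [aMinus, Finsupp.lsum_single]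
  rfl

lemma aMinus_single_cons (i j : Fin d) (v : List (Fin d)) (a : ℝ) :
    aMinus i (Finsupp.single (j :: v) a) =
      if j = i then Finsupp.single v a else 0 := by
  rw [aMinus, Finsupp.lsum_single]
  by_cases h : j = i <;> simp [h]

lemma Cop_single (c : List (Fin d) → ℝ) (u : List (Fin d)) (a : ℝ) :
    Cop c (Finsupp.single u a) = c u • Finsupp.single u a := by
  rw [Cop, diagOp, Finsupp.lsum_single]
  rfl

lemma Tmat_single (t : List (Fin d) → List (Fin d) → ℝ) (u : List (Fin d)) (a : ℝ) :
    Tmat t (Finsupp.single u a) =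
      ∑ w ∈ wordsLen d u.length, t w u • Finsupp.single w a := by
  rw [Tmat, Finsupp.lsum_single, LinearMap.sum_apply]
  rfl

lemma mem_wordsLen {k : ℕ} {w : List (Fin d)} : w ∈ wordsLen d k ↔ w.length = k := by
  induction k generalizing w with
  | zero =>
      simp [wordsLen, List.length_eq_zero_iff]
  | succ k ih =>
      simp only [wordsLen, Finset.mem_image, Finset.mem_product, Finset.mem_univ, true_and]
      constructor
      · rintro ⟨⟨j, v⟩, hv, rfl⟩
        simp [ih.mp hv]
      · intro h
        cases w with
        | nil => simp at h
        | cons j v =>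
            exact ⟨⟨j, v⟩, ih.mpr (by simpa using h), rfl⟩

lemma ipC_add_right (c : List (Fin d) → ℝ) (ζ η₁ η₂ : FockF d) :
    ipC c ζ (η₁ + η₂) = ipC c ζ η₁ + ipC c ζ η₂ := map_add (ipCL c ζ) _ _

lemma ipC_smul_right (c : List (Fin d) → ℝ) (r : ℝ) (ζ η : FockF d) :
    ipC c ζ (r • η) = r * ipC c ζ η := map_smul (ipCL c ζ) _ _

lemma ipC_zero_right (c : List (Fin d) → ℝ) (ζ : FockF d) : ipC c ζ 0 = 0 :=
  map_zero (ipCL c ζ)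

lemma ipC_single_Tmat (c : List (Fin d) → ℝ) (t : List (Fin d) → List (Fin d) → ℝ)
    (u v : List (Fin d)) (a b : ℝ) :
    ipC c (Finsupp.single v b) (Tmat t (Finsupp.single u a)) =
      if v.length = u.length then t v u * kC c v * a * b else 0 := by
  classical
  rw [Tmat_single]
  rw [show ipC c (Finsupp.single v b) = ipCL c (Finsupp.single v b) from rfl]
  rw [map_sum]
  simp only [map_smul, smul_eq_mul]
  have key : ∀ w ∈ wordsLen d u.length,
      t w u * ipCL c (Finsupp.single v b) (Finsupp.single w a) =
        if w = v then t w u * (kC c v * b * a) else 0 := by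
    intro w _
    rw [show ipCL c (Finsupp.single v b) (Finsupp.single w a) =
        ipC c (Finsupp.single v b) (Finsupp.single w a) from rfl, ipC_single]
    by_cases h : v = w
    · subst h; simp
    · simp [h, Ne.symm h]
  rw [Finset.sum_congr rfl key, Finset.sum_ite_eq' (wordsLen d u.length) v]
  by_cases h : v.length = u.length
  · rw [if_pos (mem_wordsLen.mpr h), if_pos h]; ring
  · rw [if_neg (fun hm => h (mem_wordsLen.mp hm)), if_neg h]

lemma ipC_aPlus_single (c : List (Fin d) → ℝ) (i : Fin d)
    (u v : List (Fin d)) (a b : ℝ) :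
    ipC c (aPlus i (Finsupp.single u a)) (Finsupp.single v b) =
      ipC c (Finsupp.single u a) (aMinus i (Cop c (Finsupp.single v b))) := by
  rw [aPlus_single, ipC_single, Cop_single, map_smul, ipC_smul_right]
  cases v with
  | nil =>
      rw [aMinus_single_nil, ipC_zero_right, mul_zero]
      simp
  | cons j w =>
      rw [aMinus_single_cons]
      by_cases h : j = i
      · subst h
        rw [if_pos rfl, ipC_single]
        by_cases hu : u = w
        · subst hu
          rw [if_pos rfl, if_pos rfl, kC_cons]
          ring
        · rw [if_neg hu, if_neg (by simpa using hu), mul_zero]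
      · rw [if_neg h, ipC_zero_right, mul_zero,
          if_neg (by rintro heq; injection heq with h1 _; exact h h1.symm)]

lemma ipC_Tmat_single (c : List (Fin d) → ℝ) (t : Fin d → List (Fin d) → List (Fin d) → ℝ)
    (ht : TransposeCond c t) (i : Fin d) (u v : List (Fin d)) (a b : ℝ) :
    ipC c (Tmat (t i) (Finsupp.single u a)) (Finsupp.single v b) =
      ipC c (Finsupp.single u a) (Tmat (t i) (Finsupp.single v b)) := by
  rw [ipC_symm, ipC_single_Tmat, ipC_single_Tmat]
  by_cases h : u.length = v.length
  · rw [if_pos h.symm, if_pos h]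
    have hh := ht i v u
    calc t i v u * kC c v * a * b = t i v u * kC c v * (a * b) := by ring
      _ = kC c u * t i u v * (a * b) := by rw [hh]
      _ = t i u v * kC c u * b * a := by ring
  · rw [if_neg (fun hh => h hh.symm), if_neg h]

lemma Xop_symm (c : List (Fin d) → ℝ) (t : Fin d → List (Fin d) → List (Fin d) → ℝ)
    (ht : TransposeCond c t) (i : Fin d) (ζ η : FockF d) :
    ipC c (Xop c t i ζ) η = ipC c ζ (Xop c t i η) := by
  apply ipC_ext
  intro u v a b
  rw [Xop]
  simp only [LinearMap.add_apply, LinearMap.comp_apply]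
  have hC : ipC c (aMinus i (Cop c (Finsupp.single u a))) (Finsupp.single v b) =
      ipC c (Finsupp.single u a) (aPlus i (Finsupp.single v b)) := by
    rw [ipC_symm, ← ipC_aPlus_single, ipC_symm]
  rw [ipC_add_left, ipC_add_left, ipC_add_right, ipC_add_right,
    ipC_aPlus_single, ipC_Tmat_single c t ht, hC]
  ring

lemma evalX_adjoint (c : List (Fin d) → ℝ) (t : Fin d → List (Fin d) → List (Fin d) → ℝ)
    (ht : TransposeCond c t) (p : NCPoly d) :
    ∀ ζ η : FockF d, ipC c (evalX c t p ζ) η = ipC c ζ (evalX c t (star p) η) := by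
  induction p using FreeAlgebra.induction with
  | grade0 r =>
      intro ζ η
      rw [FreeAlgebra.star_algebraMap, AlgHom.commutes, Module.algebraMap_end_apply,
        Module.algebraMap_end_apply, ipC_smul_left, ipC_smul_right]
  | grade1 i =>
      intro ζ η
      rw [FreeAlgebra.star_ι]
      have : evalX c t (FreeAlgebra.ι ℝ i) = Xop c t i := FreeAlgebra.lift_ι_apply _ _
      rw [this]
      exact Xop_symm c t ht i ζ η
  | mul p q hp hq =>
      intro ζ η
      rw [star_mul, map_mul, map_mul, Module.End.mul_apply, Module.End.mul_apply, hp, hq]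
  | add p q hp hq =>
      intro ζ η
      rw [star_add, map_add, map_add, LinearMap.add_apply, LinearMap.add_apply,
        ipC_add_left, ipC_add_right, hp, hq]

lemma fockPhi_apply (c : List (Fin d) → ℝ) (t : Fin d → List (Fin d) → List (Fin d) → ℝ)
    (p : NCPoly d) : fockPhi c t p = ipC c vac (evalX c t p vac) := rfl

end Aux


/-- the vacuum expectation functional P ↦ ⟨Ω, P(X₁,…,X_d)Ω⟩_C is a
state: linear (it is a linear map), unital, positive and *-compatible. -/
theorem fock_functional_is_state {d : ℕ} (c : List (Fin d) → ℝ) (hc : ∀ u, 0 ≤ c u)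
    (t : Fin d → List (Fin d) → List (Fin d) → ℝ) (hdeg : DegPres t)
    (ht : TransposeCond c t) :
    IsState (fockPhi c t) := by
  constructor
  · rw [fockPhi_apply, map_one, Module.End.one_apply, vac, ipC_single, if_pos rfl, kC_nil]
    norm_num
  · intro p
    rw [fockPhi_apply, fockPhi_apply, ← evalX_adjoint c t ht p, ipC_symm]
  · intro p
    rw [fockPhi_apply, map_mul, Module.End.mul_apply, ← evalX_adjoint c t ht p]
    exact ipC_nonneg c hc _
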